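/- arXiv:2106.04373 — 2 statements merged into one kernel-verified Lean document; each statement's English description precedes it below -/
import Mathlib

section
/- Let Z₁ < Z₂ < ⋯ < Z_n be real numbers (so Z_i has rank i). Then the vector (a_n(1,α),…,a_n(n,α)) of Hájek scores maximizes ∑ᵢ Zᵢ aᵢ over all vectors (a₁,…,a_n) satisfying ∑ᵢ aᵢ = n(1−α) and 0 ≤ aᵢ ≤ 1 for all i. -/
/-- The Hájek score `a_n(i,α)`: `0` if `i ≤ nα`, `i - nα` if `nα ≤ i ≤ nα+1`,
and `1` if `i ≥ nα+1`. -/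
noncomputable def hajekScore (n i : ℕ) (α : ℝ) : ℝ :=
  max 0 (min 1 ((i : ℝ) - n * α))

lemma clamp_key (x c : ℝ) :
    max 0 (min 1 (x + 1 - c)) = 1 - (min (x + 1) c - min x c) := by
  simp only [max_def, min_def]
  split_ifs <;> linarith

/-- If `Z₁ < ⋯ < Z_n` (so `Z i` has rank `i+1` in `Fin n` indexing), the vector of
Hájek scores maximizes `∑ᵢ Zᵢ aᵢ` over all `(a₁,…,a_n)` with `∑ᵢ aᵢ = n(1-α)` and
`0 ≤ aᵢ ≤ 1`. -/
theorem hajekScore_maximizes (n : ℕ) (hn : 1 ≤ n) (α : ℝ) (hα : α ∈ Set.Icc (0 : ℝ) 1)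
    (Z : Fin n → ℝ) (hZ : StrictMono Z) (a : Fin n → ℝ)
    (hsum : ∑ i, a i = n * (1 - α)) (hbd : ∀ i, 0 ≤ a i ∧ a i ≤ 1) :
    ∑ i, Z i * a i ≤ ∑ i, Z i * hajekScore n (i.1 + 1) α := by
  set c : ℝ := (n : ℝ) * α with hc
  have hc0 : 0 ≤ c := mul_nonneg (Nat.cast_nonneg n) hα.1
  have hcn : c ≤ n := by
    have := mul_le_mul_of_nonneg_left hα.2 (Nat.cast_nonneg n)
    simpa using this
  set B : ℕ → ℝ := fun j => hajekScore n (j + 1) α with hB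
  have hBval : ∀ j : ℕ, B j = 1 - (min ((j : ℝ) + 1) c - min (j : ℝ) c) := by
    intro j
    have : ((j + 1 : ℕ) : ℝ) - (n : ℝ) * α = (j : ℝ) + 1 - c := by push_cast; ring
    simp only [hB, hajekScore, this]
    exact clamp_key (j : ℝ) c
  have hprefB : ∀ k : ℕ, ∑ j ∈ Finset.range k, B j = (k : ℝ) - min (k : ℝ) c := by
    intro k
    have htel : ∑ j ∈ Finset.range k, (min ((j : ℝ) + 1) c - min (j : ℝ) c)
        = min (k : ℝ) c - min (0 : ℝ) c := by
      have := Finset.sum_range_sub (fun j : ℕ => min ((j : ℕ) : ℝ) c) k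
      simpa [Nat.cast_add, Nat.cast_one] using this
    calc ∑ j ∈ Finset.range k, B j
        = ∑ j ∈ Finset.range k, (1 - (min ((j : ℝ) + 1) c - min (j : ℝ) c)) := by
          exact Finset.sum_congr rfl (fun j _ => hBval j)
      _ = (k : ℝ) - (min (k : ℝ) c - min (0 : ℝ) c) := by
          rw [Finset.sum_sub_distrib, htel]; simp
      _ = (k : ℝ) - min (k : ℝ) c := by rw [min_eq_left hc0]; ring
  set A : ℕ → ℝ := fun j => if h : j < n then a ⟨j, h⟩ else 0 with hA
  have hA0 : ∀ j, 0 ≤ A j := by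
    intro j; simp only [hA]; split
    · exact (hbd _).1
    · exact le_rfl
  have hA1 : ∀ j, A j ≤ 1 := by
    intro j; simp only [hA]; split
    · exact (hbd _).2
    · norm_num
  have hsumA : ∑ j ∈ Finset.range n, A j = (n : ℝ) * (1 - α) := by
    rw [← Fin.sum_univ_eq_sum_range]
    rw [← hsum]
    exact Finset.sum_congr rfl (fun i _ => by simp [hA, i.2])
  have hprefA : ∀ k, k ≤ n → (k : ℝ) - min (k : ℝ) c ≤ ∑ j ∈ Finset.range k, A j := by
    intro k hk
    have hnonneg : 0 ≤ ∑ j ∈ Finset.range k, A j :=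
      Finset.sum_nonneg fun j _ => hA0 j
    have htail : ∑ j ∈ Finset.Ico k n, A j ≤ (n : ℝ) - k := by
      calc ∑ j ∈ Finset.Ico k n, A j ≤ ∑ _j ∈ Finset.Ico k n, (1 : ℝ) :=
            Finset.sum_le_sum fun j _ => hA1 j
        _ = ((n - k : ℕ) : ℝ) := by simp
        _ = (n : ℝ) - k := by rw [Nat.cast_sub hk]
    have hsplit : ∑ j ∈ Finset.range k, A j + ∑ j ∈ Finset.Ico k n, A j
        = ∑ j ∈ Finset.range n, A j := by
      simp only [Finset.range_eq_Ico]
      exact Finset.sum_Ico_consecutive _ (Nat.zero_le k) hk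
    have hlow : (k : ℝ) - c ≤ ∑ j ∈ Finset.range k, A j := by
      have : ∑ j ∈ Finset.range k, A j = (n : ℝ) * (1 - α) - ∑ j ∈ Finset.Ico k n, A j := by
        linarith [hsplit, hsumA]
      rw [this]
      have : (n : ℝ) * (1 - α) = (n : ℝ) - c := by rw [hc]; ring
      rw [this]
      linarith
    rcases le_total (k : ℝ) c with h | h
    · rw [min_eq_left h]; simpa using hnonneg
    · rw [min_eq_right h]; exact hlow
  -- extended Z
  set Z' : ℕ → ℝ := fun j => Z ⟨min j (n - 1), by omega⟩ with hZ'
  have hZ'mono : ∀ i : ℕ, Z' i ≤ Z' (i + 1) := by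
    intro i
    apply hZ.monotone
    simp only [Fin.mk_le_mk]
    omega
  set D : ℕ → ℝ := fun j => B j - A j with hD
  -- prefix sums of D are nonpositive
  have hDpref : ∀ k, k ≤ n → ∑ j ∈ Finset.range k, D j ≤ 0 := by
    intro k hk
    have : ∑ j ∈ Finset.range k, D j
        = ∑ j ∈ Finset.range k, B j - ∑ j ∈ Finset.range k, A j := by
      simp [hD, Finset.sum_sub_distrib]
    rw [this, hprefB k]
    linarith [hprefA k hk]
  have hDtotal : ∑ j ∈ Finset.range n, D j = 0 := by
    have : ∑ j ∈ Finset.range n, D j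
        = ∑ j ∈ Finset.range n, B j - ∑ j ∈ Finset.range n, A j := by
      simp [hD, Finset.sum_sub_distrib]
    rw [this, hprefB n, hsumA, min_eq_right hcn, hc]
    ring
  -- Abel summation
  have habel := Finset.sum_range_by_parts Z' D n
  have hmain : 0 ≤ ∑ j ∈ Finset.range n, Z' j * D j := by
    have h2 : ∑ i ∈ Finset.range (n - 1),
        (Z' (i + 1) - Z' i) • (∑ j ∈ Finset.range (i + 1), D j) ≤ 0 := by
      apply Finset.sum_nonpos
      intro i hi
      have hi' : i < n - 1 := Finset.mem_range.mp hi
      have h1 : 0 ≤ Z' (i + 1) - Z' i := sub_nonneg.mpr (hZ'mono i)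
      have h2 : ∑ j ∈ Finset.range (i + 1), D j ≤ 0 := hDpref (i + 1) (by omega)
      exact mul_nonpos_of_nonneg_of_nonpos h1 h2
    have : ∑ j ∈ Finset.range n, Z' j • D j
        = Z' (n - 1) • (∑ j ∈ Finset.range n, D j)
          - ∑ i ∈ Finset.range (n - 1), (Z' (i + 1) - Z' i) •
              (∑ j ∈ Finset.range (i + 1), D j) := habel
    rw [hDtotal, smul_zero, zero_sub] at this
    simp only [smul_eq_mul] at this h2
    rw [this]
    linarith
  -- convert goal
  have hconv : ∀ (f : Fin n → ℝ) (g : ℕ → ℝ), (∀ i : Fin n, f i = g i.1) →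
      ∑ i, f i = ∑ j ∈ Finset.range n, g j := by
    intro f g h
    rw [← Fin.sum_univ_eq_sum_range]
    exact Finset.sum_congr rfl fun i _ => h i
  have hZeq : ∀ i : Fin n, Z i = Z' i.1 := by
    intro i
    simp only [hZ']
    congr 1
    exact Fin.ext (by have := i.2; simp; omega)
  have hL : ∑ i, Z i * a i = ∑ j ∈ Finset.range n, Z' j * A j := by
    apply hconv
    intro i
    rw [hZeq i]
    congr 1
    simp [hA, i.2]
  have hR : ∑ i, Z i * hajekScore n (i.1 + 1) α = ∑ j ∈ Finset.range n, Z' j * B j := by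
    apply hconv
    intro i
    rw [hZeq i]
  rw [hL, hR]
  have : ∑ j ∈ Finset.range n, Z' j * D j
      = ∑ j ∈ Finset.range n, Z' j * B j - ∑ j ∈ Finset.range n, Z' j * A j := by
    simp [hD, mul_sub, Finset.sum_sub_distrib]
  linarith [hmain, this.symm ▸ hmain]
end

section
/- Let g, h : ℝᵖ → ℝ with h(b) = (1/2) bᵀQb − bᵀA for Q symmetric positive definite with smallest eigenvalue λ > 0, and suppose sup_{‖b‖ ≤ K} |g(b) − h(b)| ≤ ε where the minimizer b* = Q⁻¹A satisfies ‖b*‖ + δ ≤ K. If g is convex and b̂ minimizes g, then ‖b̂ − b*‖ ≤ δ whenever ε < λδ²/4. -/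
open Matrix

/-- Pollard's convexity lemma: a convex function uniformly `ε`-close on the ball of
radius `K` to a strictly convex quadratic `h(b) = ½ bᵀQb - bᵀA` (with smallest
eigenvalue `λ`) has its minimizer within `δ` of the quadratic's minimizer
`b* = Q⁻¹A`, provided `ε < λδ²/4`. -/
theorem pollard_convexity_lemma (p : ℕ) (Q : Matrix (Fin p) (Fin p) ℝ)
    (hQ : Q.PosDef) (A : EuclideanSpace ℝ (Fin p)) (lam : ℝ) (hlam : 0 < lam)
    (hgrowth : ∀ b : EuclideanSpace ℝ (Fin p), lam * ‖b‖ ^ 2 ≤ (b : Fin p → ℝ) ⬝ᵥ Q.mulVec b)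
    (g : EuclideanSpace ℝ (Fin p) → ℝ) (hg : ConvexOn ℝ Set.univ g)
    (K ε δ : ℝ) (hδ : 0 < δ)
    (hclose : ∀ b : EuclideanSpace ℝ (Fin p), ‖b‖ ≤ K →
      |g b - ((1 / 2) * ((b : Fin p → ℝ) ⬝ᵥ Q.mulVec b) - (b : Fin p → ℝ) ⬝ᵥ (A : Fin p → ℝ))| ≤ ε)
    (bstar : EuclideanSpace ℝ (Fin p))
    (hbstar : (bstar : Fin p → ℝ) = Q⁻¹.mulVec (A : Fin p → ℝ))
    (hK : ‖bstar‖ + δ ≤ K)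
    (bhat : EuclideanSpace ℝ (Fin p)) (hbhat : ∀ b, g bhat ≤ g b)
    (hε : ε < lam * δ ^ 2 / 4) :
    ‖bhat - bstar‖ ≤ δ := by
  -- Q bstar = A
  have hQb : Q.mulVec (bstar : Fin p → ℝ) = (A : Fin p → ℝ) := by
    rw [hbstar, Matrix.mulVec_mulVec, Matrix.mul_nonsing_inv Q
      (isUnit_iff_ne_zero.mpr hQ.det_pos.ne'), Matrix.one_mulVec]
  have hT : Qᵀ = Q := by
    have h := hQ.1
    rw [Matrix.IsHermitian, Matrix.conjTranspose] at h
    ext i j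
    simpa using congrFun (congrFun h i) j
  -- symmetry of Q in dot products
  have hsymm : ∀ x y : Fin p → ℝ, x ⬝ᵥ Q.mulVec y = y ⬝ᵥ Q.mulVec x := by
    intro x y
    rw [Matrix.dotProduct_mulVec, ← Matrix.mulVec_transpose, hT, dotProduct_comm]
  -- Pi-level quadratic expansion
  have quad : ∀ x s : Fin p → ℝ, Q.mulVec s = (A : Fin p → ℝ) →
      ((1 / 2) * (x ⬝ᵥ Q.mulVec x) - x ⬝ᵥ (A : Fin p → ℝ)) -
      ((1 / 2) * (s ⬝ᵥ Q.mulVec s) - s ⬝ᵥ (A : Fin p → ℝ)) =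
      (1 / 2) * ((x - s) ⬝ᵥ Q.mulVec (x - s)) := by
    intro x s hs
    have h1 : (x - s) ⬝ᵥ Q.mulVec (x - s)
        = x ⬝ᵥ Q.mulVec x - x ⬝ᵥ Q.mulVec s - s ⬝ᵥ Q.mulVec x + s ⬝ᵥ Q.mulVec s := by
      rw [Matrix.mulVec_sub, sub_dotProduct, dotProduct_sub,
        dotProduct_sub]
      ring
    rw [h1, hsymm s x, hs]
    ring
  set H : EuclideanSpace ℝ (Fin p) → ℝ := fun b =>
    (1 / 2) * ((b : Fin p → ℝ) ⬝ᵥ Q.mulVec b) - (b : Fin p → ℝ) ⬝ᵥ (A : Fin p → ℝ) with hH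
  have key : ∀ b : EuclideanSpace ℝ (Fin p),
      H b - H bstar = (1 / 2) * (((b - bstar : EuclideanSpace ℝ (Fin p)) : Fin p → ℝ)
        ⬝ᵥ Q.mulVec ((b - bstar : EuclideanSpace ℝ (Fin p)) : Fin p → ℝ)) := fun b =>
    quad (b : Fin p → ℝ) (bstar : Fin p → ℝ) hQb
  by_contra hcon
  push_neg at hcon
  set d : EuclideanSpace ℝ (Fin p) := bhat - bstar with hd
  have hr : (0:ℝ) < ‖d‖ := lt_trans hδ hcon
  set t : ℝ := δ / ‖d‖ with ht
  have ht0 : 0 < t := div_pos hδ hr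
  have ht1 : t < 1 := (div_lt_one hr).mpr hcon
  set btil : EuclideanSpace ℝ (Fin p) := bstar + t • d with hbtil
  have hcomb : btil = (1 - t) • bstar + t • bhat := by
    rw [hbtil, hd]; module
  have hdist : btil - bstar = t • d := by rw [hbtil]; abel
  have hnd : ‖btil - bstar‖ = δ := by
    rw [hdist, norm_smul]
    simp only [Real.norm_eq_abs, abs_of_pos ht0, ht]
    field_simp
    rw [abs_of_pos (div_pos hδ hr)]
    field_simp
  have hnb : ‖btil‖ ≤ K := by
    calc ‖btil‖ = ‖bstar + (btil - bstar)‖ := by congr 1; abel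
    _ ≤ ‖bstar‖ + ‖btil - bstar‖ := norm_add_le _ _
    _ = ‖bstar‖ + δ := by rw [hnd]
    _ ≤ K := hK
  have hns : ‖bstar‖ ≤ K := by linarith
  -- g btil ≤ g bstar
  have hgle : g btil ≤ g bstar := by
    have hc := hg.2 (Set.mem_univ bstar) (Set.mem_univ bhat)
      (by linarith : (0:ℝ) ≤ 1 - t) (le_of_lt ht0) (by ring)
    rw [← hcomb] at hc
    simp only [smul_eq_mul] at hc
    have h2 : t * g bhat ≤ t * g btil :=
      mul_le_mul_of_nonneg_left (hbhat btil) ht0.le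
    have h3 : (1 - t) * g btil ≤ (1 - t) * g bstar := by linarith
    exact le_of_mul_le_mul_left h3 (by linarith)
  have h1 := hclose btil hnb
  have h2 := hclose bstar hns
  rw [abs_le] at h1 h2
  have hgrow := hgrowth (btil - bstar)
  have hk := key btil
  rw [hnd] at hgrow
  have hsub : ((btil - bstar : EuclideanSpace ℝ (Fin p)) : Fin p → ℝ)
      = (btil : Fin p → ℝ) - (bstar : Fin p → ℝ) := rfl
  rw [hsub] at hgrow
  have hk2 := quad (btil : Fin p → ℝ) (bstar : Fin p → ℝ) hQb
  linarith [h1.1, h2.2, hk2, hgrow, hgle, hε]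
end
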